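/- arXiv:q-alg/9602033 — 3 statements merged into one kernel-verified Lean document; each statement's English description precedes it below -/
import Mathlib

section
/- Fix 0<q<1 and an integer n ≥ 1. Define the multiple q-gamma function by G_n(z+1;q) := (1-q)^{-binom(z,n)} · ∏_{k=1}^∞ ((1-q^{z+k})/(1-q^k))^{-binom(-k,n-1)} · (1-q^k)^{binom(z-k,n-1)-binom(-k,n-1)}, and G_0(z;q) := (1-q^z)/(1-q). Then the infinite product converges for every real x > 0, and G_n(x+1;q) = G_{n-1}(x;q)·G_n(x;q) for all real x > 0, and G_n(1;q) = 1. -/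
open Filter Topology MeasureTheory

noncomputable section

/-- Generalized binomial coefficient `binom(z,n) = z(z-1)⋯(z-n+1)/n!` (real). -/
def gbinom (z : ℝ) (n : ℕ) : ℝ := (∏ i ∈ Finset.range n, (z - i)) / (n.factorial : ℝ)

/-- The `k`-th factor (for `k ≥ 1`, indexed by `k-1 : ℕ`) of the infinite product defining the
multiple `q`-gamma function `G_n(z+1;q)`, namely
`((1-q^{z+k})/(1-q^k))^{-binom(-k,n-1)} · (1-q^k)^{binom(z-k,n-1) - binom(-k,n-1)}`. -/
def qGammaTerm (n : ℕ) (q z : ℝ) (k : ℕ) : ℝ :=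
  ((1 - q ^ (z + (k : ℝ) + 1)) / (1 - q ^ ((k : ℝ) + 1))) ^ (-gbinom (-((k : ℝ) + 1)) (n - 1)) *
    (1 - q ^ ((k : ℝ) + 1)) ^
      (gbinom (z - ((k : ℝ) + 1)) (n - 1) - gbinom (-((k : ℝ) + 1)) (n - 1))

/-- The multiple `q`-gamma function `G_n(z;q)`: `G_0(z;q) = (1-q^z)/(1-q)` and, for `n ≥ 1`,
`G_n(z+1;q) = (1-q)^{-binom(z,n)} · ∏_{k=1}^∞ qGammaTerm n q z k`. -/
def qMultiGamma (n : ℕ) (q : ℝ) (z : ℝ) : ℝ :=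
  if n = 0 then (1 - q ^ z) / (1 - q)
  else (1 - q) ^ (-gbinom (z - 1) n) * ∏' k : ℕ, qGammaTerm n q (z - 1) k

end

/-!
Taking logarithms turns the product into the series
`∑ₖ (-binom(-k, n-1) log(1 - q^{z+k}) + binom(z-k, n-1) log(1 - q^k))`, which converges absolutely
because its coefficients grow polynomially in `k` while `log(1 - q^{s+k}) = O(q^k)`. In
`log G_n(x+1) - log G_n(x) - log G_{n-1}(x)` Pascal's rule `binom(w+1, m+1) = binom(w, m) + binom(w, m+1)`
cancels every coefficient of `log(1 - q^k)` and of `log(1 - q)`, and turns the remaining terms into the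
telescoping series `∑ₖ (binom(-k, n-1) log(1 - q^{x+k}) - binom(-k-1, n-1) log(1 - q^{x+k+1}))`,
whose sum `binom(0, n-1) log(1 - q^x)` is `log G_0(x)` for `n = 1` and `0` for `n ≥ 2`.
-/

open Real

noncomputable section

theorem gbinom_eq_choose (z : ℝ) (n : ℕ) : gbinom z n = Ring.choose z n := by
  rw [Ring.choose_eq_smul, gbinom, smul_eq_mul, ← descPochhammer_eval_eq_prod_range,
    ← Polynomial.eval₂_smulOneHom_eq_smeval, ← Polynomial.eval_map, descPochhammer_map,
    div_eq_inv_mul]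

theorem gbinom_succ_succ (z : ℝ) (m : ℕ) :
    gbinom (z + 1) (m + 1) = gbinom z m + gbinom z (m + 1) := by
  simp only [gbinom_eq_choose, Ring.choose_succ_succ]

@[simp]
theorem gbinom_zero_right (z : ℝ) : gbinom z 0 = 1 := by
  rw [gbinom_eq_choose, Ring.choose_zero_right]

@[simp]
theorem gbinom_one_right (z : ℝ) : gbinom z 1 = z := by
  rw [gbinom_eq_choose, Ring.choose_one_right]

@[simp]
theorem gbinom_zero_succ (m : ℕ) : gbinom 0 (m + 1) = 0 := by
  rw [gbinom_eq_choose, Ring.choose_zero_succ]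

theorem abs_gbinom_le (z : ℝ) (m : ℕ) : |gbinom z m| ≤ (|z| + m) ^ m := by
  have hfact : (1 : ℝ) ≤ m.factorial := by exact_mod_cast m.factorial_pos
  have hfactor : ∀ i ∈ Finset.range m, |z - i| ≤ |z| + m := fun i hi => by
    have hi : (i : ℝ) ≤ m := by exact_mod_cast (Finset.mem_range.mp hi).le
    have := abs_sub z (i : ℝ)
    rw [Nat.abs_cast] at this
    linarith
  calc |gbinom z m| = (∏ i ∈ Finset.range m, |z - i|) / m.factorial := by
        rw [gbinom, abs_div, Finset.abs_prod, Nat.abs_cast]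
    _ ≤ ∏ i ∈ Finset.range m, |z - i| :=
        div_le_self (Finset.prod_nonneg fun _ _ => abs_nonneg _) hfact
    _ ≤ (|z| + m) ^ m := by
        simpa using Finset.prod_le_prod (fun _ _ => abs_nonneg _) hfactor

theorem abs_gbinom_sub_natCast_le (c : ℝ) (m k : ℕ) :
    |gbinom (c - k) m| ≤ (|c| + m + 1) ^ m * ((k : ℝ) + 1) ^ m := by
  have hk : (0 : ℝ) ≤ k := k.cast_nonneg
  have hc : |c - k| ≤ |c| + k := by simpa [abs_of_nonneg hk] using abs_sub c (k : ℝ)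
  calc |gbinom (c - k) m| ≤ (|c - k| + m) ^ m := abs_gbinom_le _ _
    _ ≤ ((|c| + m + 1) * ((k : ℝ) + 1)) ^ m := by
        gcongr
        nlinarith [abs_nonneg c, (m.cast_nonneg : (0 : ℝ) ≤ m)]
    _ = (|c| + m + 1) ^ m * ((k : ℝ) + 1) ^ m := mul_pow _ _ _

theorem abs_log_one_sub_le {u : ℝ} (hu0 : 0 ≤ u) (hu1 : u < 1) :
    |log (1 - u)| ≤ u / (1 - u) := by
  have hpos : 0 < 1 - u := by linarith
  rw [abs_of_nonpos (log_nonpos hpos.le (by linarith))]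
  have h := one_sub_inv_le_log_of_pos hpos
  have hrw : 1 - (1 - u)⁻¹ = -(u / (1 - u)) := by field_simp; ring
  linarith

section Series

variable {q : ℝ}

theorem abs_log_one_sub_rpow_add_le (hq0 : 0 < q) (hq1 : q < 1) {s : ℝ} (hs : 0 < s) (k : ℕ) :
    |log (1 - q ^ (s + k))| ≤ q ^ s / (1 - q ^ s) * q ^ k := by
  have hqs1 : q ^ s < 1 := rpow_lt_one hq0.le hq1 hs
  have hqk : q ^ k ≤ 1 := pow_le_one₀ hq0.le hq1.le
  have hu : q ^ (s + k) = q ^ s * q ^ k := by rw [rpow_add hq0, rpow_natCast]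
  have hule : q ^ s * q ^ k ≤ q ^ s := mul_le_of_le_one_right (by positivity) hqk
  calc |log (1 - q ^ (s + k))| ≤ q ^ s * q ^ k / (1 - q ^ s * q ^ k) := by
        rw [hu]; exact abs_log_one_sub_le (by positivity) (by linarith)
    _ ≤ q ^ s * q ^ k / (1 - q ^ s) := by gcongr
    _ = q ^ s / (1 - q ^ s) * q ^ k := by ring

theorem summable_succ_pow_mul_geometric (hq0 : 0 < q) (hq1 : q < 1) (m : ℕ) :
    Summable fun k : ℕ => ((k : ℝ) + 1) ^ m * q ^ k := by
  have h := (summable_nat_add_iff 1).mpr <|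
    summable_pow_mul_geometric_of_norm_lt_one (R := ℝ) m (r := q) (by rwa [norm_of_nonneg hq0.le])
  refine (h.mul_left q⁻¹).congr fun k => ?_
  push_cast
  field_simp
  ring

theorem summable_gbinom_mul_log_one_sub_rpow (hq0 : 0 < q) (hq1 : q < 1) (m : ℕ) (c : ℝ)
    {s : ℝ} (hs : 0 < s) :
    Summable fun k : ℕ => gbinom (c - k) m * log (1 - q ^ (s + k)) := by
  have hqs1 : q ^ s < 1 := rpow_lt_one hq0.le hq1 hs
  refine Summable.of_norm_bounded
    ((summable_succ_pow_mul_geometric hq0 hq1 m).mul_left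
      ((|c| + m + 1) ^ m * (q ^ s / (1 - q ^ s)))) fun k => ?_
  calc ‖gbinom (c - k) m * log (1 - q ^ (s + k))‖
      = |gbinom (c - k) m| * |log (1 - q ^ (s + k))| := by rw [norm_mul, norm_eq_abs, norm_eq_abs]
    _ ≤ ((|c| + m + 1) ^ m * ((k : ℝ) + 1) ^ m) * (q ^ s / (1 - q ^ s) * q ^ k) := by
        have hbound : 0 ≤ q ^ s / (1 - q ^ s) := div_nonneg (by positivity) (by linarith)
        gcongr
        · exact abs_gbinom_sub_natCast_le c m k
        · exact abs_log_one_sub_rpow_add_le hq0 hq1 hs k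
    _ = (|c| + m + 1) ^ m * (q ^ s / (1 - q ^ s)) * (((k : ℝ) + 1) ^ m * q ^ k) := by ring

end Series

/-- `log` of `qGammaTerm n q z k`, valid for `z > -1`. -/
def logQGammaTerm (n : ℕ) (q z : ℝ) (k : ℕ) : ℝ :=
  -gbinom (-((k : ℝ) + 1)) (n - 1) * log (1 - q ^ (z + k + 1)) +
    gbinom (z - ((k : ℝ) + 1)) (n - 1) * log (1 - q ^ ((k : ℝ) + 1))

/-- `log` of `qMultiGamma n q x`, valid for `x > 0`. -/
def logQMultiGamma (n : ℕ) (q x : ℝ) : ℝ :=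
  if n = 0 then log (1 - q ^ x) - log (1 - q)
  else -gbinom (x - 1) n * log (1 - q) + ∑' k, logQGammaTerm n q (x - 1) k

section Product

variable {q : ℝ}

theorem one_sub_rpow_pos (hq0 : 0 < q) (hq1 : q < 1) {s : ℝ} (hs : 0 < s) : 0 < 1 - q ^ s :=
  sub_pos.mpr (rpow_lt_one hq0.le hq1 hs)

theorem summable_logQGammaTerm (hq0 : 0 < q) (hq1 : q < 1) (n : ℕ) {z : ℝ} (hz : -1 < z) :
    Summable (logQGammaTerm n q z) := by
  have h₁ := summable_gbinom_mul_log_one_sub_rpow hq0 hq1 (n - 1) (-1) (s := z + 1) (by linarith)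
  have h₂ := summable_gbinom_mul_log_one_sub_rpow hq0 hq1 (n - 1) (z - 1) one_pos
  refine (h₁.neg.add h₂).congr fun k => ?_
  simp only [logQGammaTerm, neg_mul]
  ring_nf

theorem qGammaTerm_eq_exp (hq0 : 0 < q) (hq1 : q < 1) (n : ℕ) {z : ℝ} (hz : -1 < z) (k : ℕ) :
    qGammaTerm n q z k = exp (logQGammaTerm n q z k) := by
  have ha := one_sub_rpow_pos hq0 hq1 (s := z + k + 1) (by linarith [k.cast_nonneg (α := ℝ)])
  have hb := one_sub_rpow_pos hq0 hq1 (s := (k : ℝ) + 1) (by positivity)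
  rw [qGammaTerm, logQGammaTerm, rpow_def_of_pos (div_pos ha hb), rpow_def_of_pos hb,
    log_div ha.ne' hb.ne', ← exp_add]
  ring_nf

theorem hasProd_qGammaTerm (hq0 : 0 < q) (hq1 : q < 1) (n : ℕ) {z : ℝ} (hz : -1 < z) :
    HasProd (qGammaTerm n q z) (exp (∑' k, logQGammaTerm n q z k)) := by
  rw [show qGammaTerm n q z = exp ∘ logQGammaTerm n q z from
    funext (qGammaTerm_eq_exp hq0 hq1 n hz)]
  exact (summable_logQGammaTerm hq0 hq1 n hz).hasSum.rexp

theorem qMultiGamma_eq_exp (hq0 : 0 < q) (hq1 : q < 1) (n : ℕ) {x : ℝ} (hx : 0 < x) :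
    qMultiGamma n q x = exp (logQMultiGamma n q x) := by
  have hq : 0 < 1 - q := by linarith
  rw [qMultiGamma, logQMultiGamma]
  split_ifs
  · rw [exp_sub, exp_log (one_sub_rpow_pos hq0 hq1 hx), exp_log hq]
  · rw [(hasProd_qGammaTerm hq0 hq1 n (by linarith)).tprod_eq, rpow_def_of_pos hq, exp_add,
      mul_comm (log _)]

theorem qMultiGamma_one (hq0 : 0 < q) (hq1 : q < 1) {n : ℕ} (hn : n ≠ 0) :
    qMultiGamma n q 1 = 1 := by
  obtain ⟨m, rfl⟩ := Nat.exists_eq_succ_of_ne_zero hn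
  have hterm : ∀ k, qGammaTerm (m + 1) q 0 k = 1 := fun k => by
    rw [qGammaTerm_eq_exp hq0 hq1 _ neg_one_lt_zero, logQGammaTerm, exp_eq_one_iff]
    ring_nf
  simp [qMultiGamma, hterm]

end Product

theorem hasSum_sub_succ {α : Type*} [AddCommGroup α] [TopologicalSpace α]
    [IsTopologicalAddGroup α] {f : ℕ → α} (hf : Summable f) :
    HasSum (fun k => f k - f (k + 1)) (f 0) := by
  convert hf.hasSum.sub ((hasSum_nat_add_iff' 1).mpr hf.hasSum) using 1
  simp

section FunctionalEquation

variable {q : ℝ}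

theorem hasSum_gbinom_mul_log_one_sub_rpow_sub_succ (hq0 : 0 < q) (hq1 : q < 1) (m : ℕ) {x : ℝ}
    (hx : 0 < x) :
    HasSum (fun k : ℕ => gbinom (-k) m * log (1 - q ^ (x + k)) -
        gbinom (-((k : ℝ) + 1)) m * log (1 - q ^ (x + k + 1)))
      (gbinom 0 m * log (1 - q ^ x)) := by
  have h := hasSum_sub_succ (summable_gbinom_mul_log_one_sub_rpow hq0 hq1 m 0 hx)
  simp only [Nat.cast_zero, sub_zero, add_zero, zero_sub] at h
  refine h.congr_fun fun k => ?_
  push_cast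
  ring_nf

theorem logQGammaTerm_one_sub (q x : ℝ) (k : ℕ) :
    logQGammaTerm 1 q x k - logQGammaTerm 1 q (x - 1) k =
      log (1 - q ^ (x + k)) - log (1 - q ^ (x + k + 1)) := by
  simp only [logQGammaTerm, Nat.sub_self, gbinom_zero_right]
  rw [show x - 1 + k + 1 = x + k by ring]
  ring

theorem logQGammaTerm_add_two_sub (q x : ℝ) (m k : ℕ) :
    logQGammaTerm (m + 2) q x k - logQGammaTerm (m + 2) q (x - 1) k -
        logQGammaTerm (m + 1) q (x - 1) k =
      gbinom (-k) (m + 1) * log (1 - q ^ (x + k)) -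
        gbinom (-((k : ℝ) + 1)) (m + 1) * log (1 - q ^ (x + k + 1)) := by
  have h₁ := gbinom_succ_succ (x - 1 - ((k : ℝ) + 1)) m
  have h₂ := gbinom_succ_succ (-((k : ℝ) + 1)) m
  rw [show x - 1 - ((k : ℝ) + 1) + 1 = x - ((k : ℝ) + 1) by ring] at h₁
  rw [show -((k : ℝ) + 1) + 1 = -k by ring] at h₂
  simp only [logQGammaTerm, show m + 2 - 1 = m + 1 from rfl, Nat.add_sub_cancel, h₁, h₂]
  rw [show x - 1 + k + 1 = x + k by ring]
  ring

theorem logQMultiGamma_one_add_one (hq0 : 0 < q) (hq1 : q < 1) {x : ℝ} (hx : 0 < x) :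
    logQMultiGamma 1 q (x + 1) = logQMultiGamma 0 q x + logQMultiGamma 1 q x := by
  have htel := hasSum_gbinom_mul_log_one_sub_rpow_sub_succ hq0 hq1 0 hx
  simp only [gbinom_zero_right, one_mul, ← logQGammaTerm_one_sub] at htel
  have hsum := ((summable_logQGammaTerm hq0 hq1 1 (z := x) (by linarith)).hasSum.sub
    (summable_logQGammaTerm hq0 hq1 1 (z := x - 1) (by linarith)).hasSum).unique htel
  simp only [logQMultiGamma, one_ne_zero, if_false, if_true, add_sub_cancel_right,
    gbinom_one_right]
  linarith

theorem logQMultiGamma_add_two_add_one (hq0 : 0 < q) (hq1 : q < 1) (m : ℕ) {x : ℝ}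
    (hx : 0 < x) :
    logQMultiGamma (m + 2) q (x + 1) = logQMultiGamma (m + 1) q x + logQMultiGamma (m + 2) q x := by
  have hS : ∀ n, Summable (logQGammaTerm n q (x - 1)) :=
    fun n => summable_logQGammaTerm hq0 hq1 n (by linarith)
  have htel := hasSum_gbinom_mul_log_one_sub_rpow_sub_succ hq0 hq1 (m + 1) hx
  simp only [gbinom_zero_succ, zero_mul, ← logQGammaTerm_add_two_sub] at htel
  have hsum := (((summable_logQGammaTerm hq0 hq1 (m + 2) (z := x) (by linarith)).hasSum.sub
    (hS (m + 2)).hasSum).sub (hS (m + 1)).hasSum).unique htel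
  have hpascal := gbinom_succ_succ (x - 1) (m + 1)
  rw [sub_add_cancel] at hpascal
  simp only [logQMultiGamma, show m + 2 ≠ 0 by omega, show m + 1 ≠ 0 by omega, if_false,
    add_sub_cancel_right]
  linear_combination hsum - log (1 - q) * hpascal

theorem logQMultiGamma_add_one (hq0 : 0 < q) (hq1 : q < 1) {n : ℕ} (hn : n ≠ 0) {x : ℝ}
    (hx : 0 < x) :
    logQMultiGamma n q (x + 1) = logQMultiGamma (n - 1) q x + logQMultiGamma n q x :=
  match n, hn with
  | 1, _ => logQMultiGamma_one_add_one hq0 hq1 hx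
  | m + 2, _ => logQMultiGamma_add_two_add_one hq0 hq1 m hx

end FunctionalEquation

/-- For `0 < q < 1` and `n ≥ 1`, the infinite product defining the multiple `q`-gamma function
`G_n(x+1;q)` converges for every real `x > 0`; moreover `G_n(x+1;q) = G_{n-1}(x;q)·G_n(x;q)` for
all real `x > 0`, and `G_n(1;q) = 1`. -/
theorem qMultiGamma_multipliable_funEq_and_one (q : ℝ) (hq0 : 0 < q) (hq1 : q < 1)
    (n : ℕ) (hn : 1 ≤ n) :
    (∀ x : ℝ, 0 < x → Multipliable (qGammaTerm n q x)) ∧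
    (∀ x : ℝ, 0 < x → qMultiGamma n q (x + 1) = qMultiGamma (n - 1) q x * qMultiGamma n q x) ∧
    qMultiGamma n q 1 = 1 := by
  have hn0 : n ≠ 0 := Nat.one_le_iff_ne_zero.mp hn
  refine ⟨fun x hx => (hasProd_qGammaTerm hq0 hq1 n (by linarith)).multipliable,
    fun x hx => ?_, qMultiGamma_one hq0 hq1 hn0⟩
  rw [qMultiGamma_eq_exp hq0 hq1 n (by linarith), qMultiGamma_eq_exp hq0 hq1 _ hx,
    qMultiGamma_eq_exp hq0 hq1 n hx, ← exp_add, logQMultiGamma_add_one hq0 hq1 hn0 hx]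

end
end

section
/- Fix integers n ≥ 1 and r ≥ 1 and a real δ with 0 < δ < π. Then F_{n,r-1}(z) := (d/dt)^{r-1}[ binom(-t,n-1)·log((z+t)/(z+1)) ] evaluated at t=1 satisfies |F_{n,r-1}(z)| = O(|z|^{n-r}) as |z| → ∞ with z in the sector Δ_δ := {z ∈ ℂ : |arg z| < π - δ}. -/
/-! For `z + 1 ≠ 0` the function `w ↦ binom(-w, n-1) · log (1 + (w - 1)/(z + 1))` is holomorphic
on the disc `|w - 1| < |z + 1|` and agrees with the function differentiated in `F` at real `w`,
so the real derivatives at `t = 1` are complex ones. On the circle `|w - 1| = |z + 1|/2` the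
logarithm is at most `3/4` and the binomial coefficient is `O(|z|^(n-1))`, so Cauchy's estimate
bounds the `(r-1)`-st derivative by `O(|z|^(n-1) / |z|^(r-1))`. -/

open Filter Topology MeasureTheory

noncomputable section

/-- Generalized binomial coefficient `binom(z,n) = z(z-1)⋯(z-n+1)/n!` (complex). -/
def gbinomC (z : ℂ) (n : ℕ) : ℂ := (∏ i ∈ Finset.range n, (z - i)) / (n.factorial : ℂ)

/-- `F_{n,r}(z) = (d/dt)^r [ binom(-t,n-1)·log((z+t)/(z+1)) ]|_{t=1}`, for complex `z`, with the
principal branch of the logarithm. -/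
def FclC (n r : ℕ) (z : ℂ) : ℂ :=
  iteratedDeriv r
    (fun t : ℝ => gbinomC (-(t : ℂ)) (n - 1) * Complex.log ((z + t) / (z + 1))) 1

open Asymptotics Complex Metric Nat

theorem iteratedDeriv_ofReal_comp {f : ℂ → ℂ} {U : Set ℂ} (hU : IsOpen U)
    (hf : DifferentiableOn ℂ f U) (k : ℕ) {t : ℝ} (ht : (t : ℂ) ∈ U) :
    iteratedDeriv k (fun s : ℝ => f s) t = iteratedDeriv k f t := by
  induction k generalizing t with
  | zero => simp
  | succ k ih =>
    have hUℝ : IsOpen {s : ℝ | (s : ℂ) ∈ U} := hU.preimage continuous_ofReal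
    have heq : (fun s : ℝ => iteratedDeriv k (fun s' : ℝ => f s') s)
        =ᶠ[𝓝 t] fun s : ℝ => iteratedDeriv k f s :=
      eventually_of_mem (hUℝ.mem_nhds ht) fun s hs => ih hs
    have hk : DifferentiableAt ℂ (iteratedDeriv k f) t := by
      rw [iteratedDeriv_eq_iterate]
      exact ((hf.analyticOnNhd hU).iterated_deriv k _ ht).differentiableAt
    rw [iteratedDeriv_succ, iteratedDeriv_succ, heq.deriv_eq, hk.hasDerivAt.comp_ofReal.deriv]

theorem differentiable_gbinomC (m : ℕ) : Differentiable ℂ fun z => gbinomC z m := by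
  unfold gbinomC
  fun_prop

theorem norm_gbinomC_le (z : ℂ) (m : ℕ) : ‖gbinomC z m‖ ≤ (‖z‖ + m) ^ m := by
  have hfact : (1 : ℝ) ≤ m ! := mod_cast m.factorial_pos
  calc ‖gbinomC z m‖ ≤ ‖∏ i ∈ Finset.range m, (z - i)‖ := by
        rw [gbinomC, norm_div, norm_natCast]
        exact div_le_self (norm_nonneg _) hfact
    _ ≤ ∏ _i ∈ Finset.range m, (‖z‖ + m) := by
        rw [norm_prod]
        refine Finset.prod_le_prod (fun _ _ => norm_nonneg _) fun i hi => ?_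
        have him : (i : ℝ) ≤ m := mod_cast (Finset.mem_range.mp hi).le
        calc ‖z - i‖ ≤ ‖z‖ + ‖(i : ℂ)‖ := norm_sub_le _ _
          _ ≤ ‖z‖ + m := by rw [norm_natCast]; linarith
    _ = (‖z‖ + m) ^ m := by rw [Finset.prod_const, Finset.card_range]

/-- `w ↦ binom(-w, n-1) · log ((z + w)/(z + 1))`, written so that it is visibly holomorphic on
`|w - 1| < |z + 1|`. -/
def FclCIntegrand (n : ℕ) (z w : ℂ) : ℂ := gbinomC (-w) (n - 1) * log (1 + (w - 1) / (z + 1))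

section FclCIntegrand

variable {n : ℕ} {z : ℂ}

theorem differentiableOn_FclCIntegrand (hz : z + 1 ≠ 0) :
    DifferentiableOn ℂ (FclCIntegrand n z) (ball 1 ‖z + 1‖) := fun w hw => by
  have hlt : ‖(w - 1) / (z + 1)‖ < 1 := by
    rw [norm_div, ← dist_eq_norm, div_lt_one (norm_pos_iff.mpr hz)]
    exact hw
  have hlog : DifferentiableAt ℂ (fun w => log (1 + (w - 1) / (z + 1))) w :=
    (differentiableAt_log (mem_slitPlane_of_norm_lt_one hlt)).comp w
      (((differentiableAt_id.sub_const 1).div_const (z + 1)).const_add (1 : ℂ))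
  exact ((differentiable_gbinomC _).comp differentiable_neg w |>.mul hlog).differentiableWithinAt

theorem FclC_eq_iteratedDeriv_FclCIntegrand (k : ℕ) (hz : z + 1 ≠ 0) :
    FclC n k z = iteratedDeriv k (FclCIntegrand n z) 1 := by
  have hfun : (fun t : ℝ => gbinomC (-(t : ℂ)) (n - 1) * log ((z + t) / (z + 1)))
      = fun t : ℝ => FclCIntegrand n z t := by
    funext t
    rw [FclCIntegrand]
    congr 2
    field_simp
    ring
  rw [FclC, hfun, iteratedDeriv_ofReal_comp isOpen_ball (differentiableOn_FclCIntegrand hz) k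
    (by simpa using hz), ofReal_one]

theorem norm_FclCIntegrand_le (hz : z + 1 ≠ 0) {w : ℂ} (hw : dist w 1 = ‖z + 1‖ / 2) :
    ‖FclCIntegrand n z w‖ ≤ 3 / 4 * (‖z + 1‖ / 2 + 1 + n) ^ (n - 1) := by
  have hlog : ‖log (1 + (w - 1) / (z + 1))‖ ≤ 3 / 4 := by
    have hhalf : ‖(w - 1) / (z + 1)‖ = 1 / 2 := by
      rw [norm_div, ← dist_eq_norm, hw]
      field_simp [norm_ne_zero_iff.mpr hz]
    have := norm_log_one_add_half_le_self hhalf.le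
    rw [hhalf] at this
    linarith
  have hbinom : ‖gbinomC (-w) (n - 1)‖ ≤ (‖z + 1‖ / 2 + 1 + n) ^ (n - 1) := by
    refine (norm_gbinomC_le _ _).trans (pow_le_pow_left₀ (by positivity) ?_ _)
    have hw1 : ‖w‖ ≤ ‖z + 1‖ / 2 + 1 := by
      simpa [hw] using dist_triangle w 1 0
    have hn : ((n - 1 : ℕ) : ℝ) ≤ n := mod_cast n.sub_le 1
    rw [norm_neg]
    linarith
  calc ‖FclCIntegrand n z w‖
      = ‖gbinomC (-w) (n - 1)‖ * ‖log (1 + (w - 1) / (z + 1))‖ := norm_mul _ _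
    _ ≤ (‖z + 1‖ / 2 + 1 + n) ^ (n - 1) * (3 / 4) :=
      mul_le_mul hbinom hlog (norm_nonneg _) (by positivity)
    _ = _ := mul_comm _ _

theorem norm_FclC_le (k : ℕ) (hz : z + 1 ≠ 0) :
    ‖FclC n k z‖ ≤ k ! * (3 / 4 * (‖z + 1‖ / 2 + 1 + n) ^ (n - 1)) / (‖z + 1‖ / 2) ^ k := by
  have hρ : 0 < ‖z + 1‖ := norm_pos_iff.mpr hz
  have hcl : DiffContOnCl ℂ (FclCIntegrand n z) (ball 1 (‖z + 1‖ / 2)) := by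
    refine ((differentiableOn_FclCIntegrand hz).mono ?_).diffContOnCl
    rw [closure_ball _ (by positivity)]
    exact closedBall_subset_ball (half_lt_self hρ)
  rw [FclC_eq_iteratedDeriv_FclCIntegrand k hz]
  exact norm_iteratedDeriv_le_of_forall_mem_sphere_norm_le k (by positivity) hcl
    fun w hw => norm_FclCIntegrand_le hz hw

end FclCIntegrand

theorem isTheta_norm_add_one_div_two :
    (fun z : ℂ => ‖z + 1‖ / 2) =Θ[Bornology.cobounded ℂ] fun z => ‖z‖ := by
  have h : (fun z : ℂ => z + 1) =Θ[Bornology.cobounded ℂ] id :=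
    (isLittleO_const_id_cobounded (1 : ℂ)).right_isTheta_add'.symm
  simp_rw [div_eq_inv_mul]
  exact (h.norm_left.norm_right).const_mul_left (by norm_num)

theorem FclC_isBigO_cobounded (n r : ℕ) (hn : 1 ≤ n) (hr : 1 ≤ r) :
    (fun z : ℂ => FclC n (r - 1) z) =O[Bornology.cobounded ℂ]
      fun z : ℂ => ‖z‖ ^ ((n : ℤ) - r) := by
  have hcauchy : (fun z : ℂ => FclC n (r - 1) z) =O[Bornology.cobounded ℂ]
      fun z => (‖z + 1‖ / 2 + 1 + n) ^ (n - 1) * ((‖z + 1‖ / 2)⁻¹) ^ (r - 1) := by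
    refine IsBigO.of_bound ((r - 1)! * (3 / 4)) ?_
    filter_upwards [Bornology.eventually_ne_cobounded (-1 : ℂ)] with z hz
    have hz1 : z + 1 ≠ 0 := by rwa [Ne, add_eq_zero_iff_eq_neg]
    refine (norm_FclC_le (r - 1) hz1).trans_eq ?_
    rw [Real.norm_of_nonneg (by positivity), inv_pow]
    ring
  have hlin : (fun z : ℂ => ‖z + 1‖ / 2 + 1 + n) =O[Bornology.cobounded ℂ] fun z => ‖z‖ := by
    simpa only [add_assoc] using isTheta_norm_add_one_div_two.isBigO.add
      (isLittleO_const_id_cobounded ((1 : ℝ) + n)).norm_right.isBigO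
  refine (hcauchy.trans ((hlin.pow _).mul (isTheta_norm_add_one_div_two.inv.isBigO.pow _))).congr'
    EventuallyEq.rfl ?_
  filter_upwards [Bornology.eventually_ne_cobounded (0 : ℂ)] with z hz
  have hexp : (n : ℤ) - r = ((n - 1 : ℕ) : ℤ) - ((r - 1 : ℕ) : ℤ) := by omega
  rw [hexp, zpow_sub₀ (norm_ne_zero_iff.mpr hz), zpow_natCast, zpow_natCast, inv_pow,
    div_eq_mul_inv]

theorem FclC_isBigO_in_sector_general (n r : ℕ) (hn : 1 ≤ n) (hr : 1 ≤ r)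
    (δ : ℝ) :
    (fun z : ℂ => FclC n (r - 1) z) =O[Bornology.cobounded ℂ ⊓
        Filter.principal {z : ℂ | |Complex.arg z| < Real.pi - δ}]
      fun z : ℂ => ‖z‖ ^ ((n : ℤ) - r) :=
  (FclC_isBigO_cobounded n r hn hr).mono inf_le_left

/-- In the sector `Δ_δ = {|arg z| < π - δ}`, `|F_{n,r-1}(z)| = O(|z|^{n-r})` as `|z| → ∞`. -/
theorem FclC_isBigO_in_sector (n r : ℕ) (hn : 1 ≤ n) (hr : 1 ≤ r)
    (δ : ℝ) (hδ : 0 < δ) (hδπ : δ < Real.pi) :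
    (fun z : ℂ => FclC n (r - 1) z) =O[Bornology.cobounded ℂ ⊓
        Filter.principal {z : ℂ | |Complex.arg z| < Real.pi - δ}]
      fun z : ℂ => ‖z‖ ^ ((n : ℤ) - r) :=
  FclC_isBigO_in_sector_general n r hn hr δ

end
end

section
/- Fix an integer n ≥ 1. For every z ∈ ℂ that is not a negative integer, the infinite product ∏_{k=1}^∞ (1+z/k)^{-binom(-k,n-1)} · exp(Φ_n(z,k)) converges absolutely (i.e. Σ_{k=1}^∞ | -binom(-k,n-1)·Log(1+z/k) + Φ_n(z,k) | < ∞), where Φ_n(z,k) := (1/(n-1)!)·Σ_{μ=-1}^{n-2} ( Σ_{r=μ+1}^{n-1} (s_{n-1,r}/(r-μ))·z^{r-μ} )·(-1)^{μ+1}·k^{μ}. -/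
open Filter Topology

noncomputable section

/-- `binom(-k, m) = (-1)^m · C(k+m-1, m)`, the (integer) value of the generalized binomial
coefficient at a negative integer `-k` (for `k ≥ 1`). -/
def negBinom (k m : ℕ) : ℤ := (-1) ^ m * (Nat.choose (k + m - 1) m : ℤ)

/-- The Stirling numbers of the first kind `s_{n,r}`, the coefficients of
`u(u-1)⋯(u-n+1) = Σ_{r=0}^n s_{n,r}·u^r`. -/
def stirlingFirst (n r : ℕ) : ℤ := (descPochhammer ℤ n).coeff r

/-- `Φ_n(z,k) = (1/(n-1)!)·Σ_{μ=-1}^{n-2} (Σ_{r=μ+1}^{n-1} (s_{n-1,r}/(r-μ))·z^{r-μ})·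
(-1)^{μ+1}·k^μ` (the summation index `μ` is encoded as `i - 1` with `i : ℕ`, `0 ≤ i ≤ n-1`). -/
def PhiW (n : ℕ) (z : ℂ) (k : ℕ) : ℂ :=
  (1 / ((n - 1).factorial : ℂ)) * ∑ i ∈ Finset.range n,
    (∑ r ∈ Finset.Icc i (n - 1),
        ((stirlingFirst (n - 1) r : ℤ) : ℂ) / ((r - i + 1 : ℕ) : ℂ) * z ^ (r - i + 1)) *
      (-1 : ℂ) ^ i * (k : ℂ) ^ ((i : ℤ) - 1)

/-!
Since `(n-1)!·binom(-k, n-1)` is the falling factorial `u(u-1)⋯(u-n+2)` at `u = -k`, it equals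
`Σ_r s_{n-1,r} (-1)^r k^r`, and after exchanging the two sums in `Φ_n` the inner sums become
`(-1)^r k^r T_{r+2}(z/k)`, where `T_N = logTaylor N` is the Taylor polynomial of `Log(1+w)` of
degree `N-1`. So `(n-1)!` times the `k`-th term is `Σ_r s_{n-1,r} (-1)^r k^r (T_{r+2}(z/k) - Log(1+z/k))`,
and each of these finitely many remainders is `O(|z|^{r+2}/k^2)`.
-/

open Complex Finset

theorem descPochhammer_eval_neg_natCast (k m : ℕ) :
    (descPochhammer ℤ m).eval (-(k : ℤ)) = negBinom k m * m.factorial := by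
  have h := ascPochhammer_eval_neg_eq_descPochhammer ℤ (-(k : ℤ)) m
  rw [neg_neg, ← Nat.cast_ascFactorial, Nat.ascFactorial_eq_factorial_mul_choose'] at h
  have hsign : (descPochhammer ℤ m).eval (-(k : ℤ)) =
      (-1) ^ m * ((-1) ^ m * (descPochhammer ℤ m).eval (-(k : ℤ))) := by
    rw [← mul_assoc, ← mul_pow, neg_one_mul, neg_neg, one_pow, one_mul]
  rw [hsign, ← h, negBinom]
  push_cast
  ring

theorem negBinom_eq_sum_stirlingFirst (k m : ℕ) :
    (negBinom k m : ℂ) =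
      1 / m.factorial * ∑ r ∈ range (m + 1), (stirlingFirst m r : ℂ) * (-1) ^ r * (k : ℂ) ^ r := by
  have h := congrArg (Int.cast : ℤ → ℂ) (descPochhammer_eval_neg_natCast k m)
  rw [Polynomial.eval_eq_sum_range, descPochhammer_natDegree] at h
  push_cast at h
  rw [(eq_div_iff (Nat.cast_ne_zero.2 m.factorial_ne_zero)).mpr h.symm, one_div, inv_mul_eq_div]
  congr 1
  refine sum_congr rfl fun r _ => ?_
  rw [stirlingFirst, neg_pow]
  ring

theorem sum_range_mul_zpow_eq_logTaylor {x : ℂ} (hx : x ≠ 0) (z : ℂ) (r : ℕ) :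
    ∑ i ∈ range (r + 1), z ^ (r - i + 1) / ((r - i + 1 : ℕ) : ℂ) * (-1) ^ i * x ^ ((i : ℤ) - 1)
      = (-1) ^ r * x ^ r * logTaylor (r + 2) (z / x) := by
  rw [← sum_range_reflect, logTaylor,
    sum_range_succ' (fun j => (-1 : ℂ) ^ (j + 1) * (z / x) ^ j / j)]
  simp only [Nat.cast_zero, div_zero, add_zero, add_tsub_cancel_right, mul_sum]
  refine sum_congr rfl fun j hj => ?_
  have hjr : j ≤ r := Nat.lt_succ_iff.mp (mem_range.mp hj)
  rw [Nat.sub_sub_self hjr, Nat.cast_sub hjr, zpow_sub₀ hx, zpow_sub₀ hx, zpow_one, zpow_natCast,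
    zpow_natCast, pow_sub₀ _ (neg_ne_zero.2 one_ne_zero) hjr, ← inv_pow, inv_neg_one, div_pow]
  field_simp
  ring

theorem PhiW_succ_eq_sum_logTaylor (m : ℕ) (z : ℂ) {k : ℕ} (hk : k ≠ 0) :
    PhiW (m + 1) z k = 1 / m.factorial * ∑ r ∈ range (m + 1),
      (stirlingFirst m r : ℂ) * (-1) ^ r * (k : ℂ) ^ r * logTaylor (r + 2) (z / k) := by
  rw [PhiW, Nat.add_sub_cancel]
  congr 1
  simp only [← Ico_add_one_right_eq_Icc, range_eq_Ico, sum_mul]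
  rw [sum_Ico_Ico_comm]
  refine sum_congr rfl fun r _ => ?_
  conv_rhs => rw [mul_assoc, mul_assoc, ← mul_assoc ((-1 : ℂ) ^ r)]
  rw [← sum_range_mul_zpow_eq_logTaylor (Nat.cast_ne_zero.2 hk), mul_sum, range_eq_Ico]
  refine sum_congr rfl fun i _ => ?_
  ring

theorem negBinom_mul_log_add_PhiW_eq_sum (m : ℕ) (z : ℂ) {k : ℕ} (hk : k ≠ 0) :
    -(negBinom k m : ℂ) * log (1 + z / k) + PhiW (m + 1) z k =
      1 / m.factorial * ∑ r ∈ range (m + 1), (stirlingFirst m r : ℂ) * (-1) ^ r *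
        ((k : ℂ) ^ r * (logTaylor (r + 2) (z / k) - log (1 + z / k))) := by
  rw [negBinom_eq_sum_stirlingFirst, PhiW_succ_eq_sum_logTaylor m z hk]
  simp only [neg_mul, mul_sub, sum_sub_distrib, sum_mul, mul_assoc]
  ring

theorem norm_logTaylor_sub_log_le {w : ℂ} (hw : ‖w‖ ≤ 1 / 2) (n : ℕ) :
    ‖logTaylor (n + 1) w - log (1 + w)‖ ≤ 2 * ‖w‖ ^ (n + 1) := by
  rw [norm_sub_rev]
  refine (norm_log_sub_logTaylor_le n (by linarith)).trans ?_
  have hinv : (1 - ‖w‖)⁻¹ ≤ 2 := by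
    rw [inv_le_comm₀ (by linarith) two_pos]
    linarith
  calc ‖w‖ ^ (n + 1) * (1 - ‖w‖)⁻¹ / (n + 1) ≤ ‖w‖ ^ (n + 1) * 2 / 1 := by
        gcongr
        linarith [n.cast_nonneg (α := ℝ)]
    _ = 2 * ‖w‖ ^ (n + 1) := by ring

theorem norm_pow_mul_logTaylor_sub_log_le (z : ℂ) (r : ℕ) {k : ℕ} (hk0 : k ≠ 0)
    (hk : 2 * ‖z‖ ≤ k) :
    ‖(k : ℂ) ^ r * (logTaylor (r + 2) (z / k) - log (1 + z / k))‖ ≤ 2 * ‖z‖ ^ (r + 2) / k ^ 2 := by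
  have hkpos : (0 : ℝ) < k := Nat.cast_pos.2 (Nat.pos_of_ne_zero hk0)
  have hkne : (k : ℝ) ≠ 0 := hkpos.ne'
  have hw : ‖z / k‖ = ‖z‖ / k := by rw [norm_div, norm_natCast]
  rw [norm_mul, norm_pow, norm_natCast]
  calc (k : ℝ) ^ r * ‖logTaylor (r + 2) (z / k) - log (1 + z / k)‖
      ≤ k ^ r * (2 * (‖z‖ / k) ^ (r + 2)) := by
        rw [← hw]
        gcongr
        exact norm_logTaylor_sub_log_le (by rw [hw, div_le_iff₀ hkpos]; linarith) (r + 1)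
    _ = 2 * ‖z‖ ^ (r + 2) / k ^ 2 := by
        rw [div_pow, pow_add (k : ℝ)]
        field_simp

theorem summable_pow_mul_logTaylor_sub_log (z : ℂ) (r : ℕ) :
    Summable fun k : ℕ => (k : ℂ) ^ r * (logTaylor (r + 2) (z / k) - log (1 + z / k)) := by
  refine ((Real.summable_one_div_nat_pow.2 one_lt_two).mul_left
    (2 * ‖z‖ ^ (r + 2))).of_norm_bounded_eventually_nat ?_
  filter_upwards [eventually_ge_atTop ⌈2 * ‖z‖⌉₊, eventually_ne_atTop 0] with k hk hk0
  rw [mul_one_div]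
  exact norm_pow_mul_logTaylor_sub_log_le z r hk0 (Nat.ceil_le.1 hk)

theorem weierstrass_product_summable_general (n : ℕ) (hn : 1 ≤ n) (z : ℂ) :
    Summable (fun k : ℕ =>
      ‖-((negBinom (k + 1) (n - 1) : ℤ) : ℂ) * Complex.log (1 + z / ((k : ℂ) + 1)) +
        PhiW n z (k + 1)‖) := by
  obtain ⟨m, rfl⟩ := Nat.exists_eq_add_of_le' hn
  rw [Nat.add_sub_cancel]
  have hsum := (summable_sum (s := range (m + 1)) fun r _ =>
    (summable_pow_mul_logTaylor_sub_log z r).mul_left ((stirlingFirst m r : ℂ) * (-1) ^ r)).mul_left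
      (1 / (m.factorial : ℂ))
  refine summable_norm_iff.2 (((summable_nat_add_iff 1).2 hsum).congr fun k => ?_)
  have h := negBinom_mul_log_add_PhiW_eq_sum m z k.succ_ne_zero
  push_cast at h ⊢
  exact h.symm

/-- For `n ≥ 1` and `z` not a negative integer, the infinite product
`∏_{k=1}^∞ (1+z/k)^{-binom(-k,n-1)}·exp(Φ_n(z,k))` converges absolutely, i.e.
`Σ_{k=1}^∞ |−binom(-k,n-1)·Log(1+z/k) + Φ_n(z,k)| < ∞`. -/
theorem weierstrass_product_summable (n : ℕ) (hn : 1 ≤ n) (z : ℂ)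
    (hz : ∀ m : ℤ, m < 0 → z ≠ (m : ℂ)) :
    Summable (fun k : ℕ =>
      ‖-((negBinom (k + 1) (n - 1) : ℤ) : ℂ) * Complex.log (1 + z / ((k : ℂ) + 1)) +
        PhiW n z (k + 1)‖) :=
  weierstrass_product_summable_general n hn z

end
end
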